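/- Fix an integer n ≥ 4 and let π_R and S₁ be as in the model folded cross cap. Then the image of {p ∈ S₁ : θ₁ ≠ 0} under π_R equals the set {((y₁, …, y_{n−1}), (η₁, …, η_{n−1})) ∈ ℝ^{n−1}×ℝ^{n−1} : η_{n−1} = y_{n−1}² η₁ and η₁ ≠ 0}. -/
import Mathlib


/-- The right projection `π_R` of the model folded cross cap canonical relation.
Points of `ℝ^{2n-1}` are written `(x, y_{n-1}, θ'')` with `x = (x₁, …, x_n)`
(indexed by `0, …, n-1`), `y_{n-1} ∈ ℝ`, `θ'' = (θ₁, …, θ_{n-2})` (indexed by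
`0, …, n-3`). -/
noncomputable def piR (n : ℕ) (hn : 4 ≤ n)
    (p : (Fin n → ℝ) × ℝ × (Fin (n - 2) → ℝ)) :
    (Fin (n - 1) → ℝ) × (Fin (n - 1) → ℝ) :=
  ⟨fun i =>
      if (i : ℕ) = 0 then
        p.1 ⟨0, by omega⟩ +
          ((p.1 ⟨n - 1, by omega⟩) ^ 2 - (p.1 ⟨n - 2, by omega⟩) ^ 2) * p.2.1 +
          p.1 ⟨n - 1, by omega⟩ * p.2.1 ^ 2
      else if (i : ℕ) = n - 2 then p.2.1
      else p.1 ⟨(i : ℕ), lt_of_lt_of_le i.isLt (Nat.sub_le n 1)⟩,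
    fun i =>
      if h : (i : ℕ) = n - 2 then
        -(2 * p.1 ⟨n - 1, by omega⟩ * p.2.1 +
            (p.1 ⟨n - 1, by omega⟩) ^ 2 - (p.1 ⟨n - 2, by omega⟩) ^ 2) * p.2.2 ⟨0, by omega⟩
      else p.2.2 ⟨(i : ℕ), by have := i.isLt; omega⟩⟩

/-- the image under `π_R` of the part of the critical set
`S₁ = {x_{n-1} = 0, x_n + y_{n-1} = 0}` where `θ₁ ≠ 0` equals
`{(y, η) : η_{n-1} = y_{n-1}² η₁, η₁ ≠ 0}`. -/
theorem stmt_8 (n : ℕ) (hn : 4 ≤ n) :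
    (piR n hn) ''
        {p : (Fin n → ℝ) × ℝ × (Fin (n - 2) → ℝ) |
          p.1 ⟨n - 2, by omega⟩ = 0 ∧ p.1 ⟨n - 1, by omega⟩ + p.2.1 = 0 ∧
            p.2.2 ⟨0, by omega⟩ ≠ 0} =
      {q : (Fin (n - 1) → ℝ) × (Fin (n - 1) → ℝ) |
        q.2 ⟨n - 2, by omega⟩ = (q.1 ⟨n - 2, by omega⟩) ^ 2 * q.2 ⟨0, by omega⟩ ∧
          q.2 ⟨0, by omega⟩ ≠ 0} := by
  ext q
  simp only [Set.mem_image, Set.mem_setOf_eq]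
  constructor
  · rintro ⟨p, ⟨h1, h2, h3⟩, rfl⟩
    have hy : p.1 ⟨n - 1, by omega⟩ = -p.2.1 := by linarith
    simp only [piR]
    rw [dif_pos (by trivial), dif_neg (by omega : ¬ (0 : ℕ) = n - 2),
      if_neg (by omega : ¬ (n - 2 : ℕ) = 0), if_pos (by trivial)]
    refine ⟨?_, h3⟩
    rw [h1, hy]; ring
  · rintro ⟨hq1, hq2⟩
    have hlt0 : 0 < n - 1 := by omega
    have hlt2 : n - 2 < n - 1 := by omega
    set Y := q.1 ⟨n - 2, by omega⟩ with hY
    refine ⟨⟨fun i => if h1 : (i : ℕ) = n - 1 then -Y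
        else if (i : ℕ) = n - 2 then 0
        else q.1 ⟨(i : ℕ), by have := i.isLt; omega⟩, Y,
        fun j => q.2 ⟨(j : ℕ), by have := j.isLt; omega⟩⟩, ⟨?_, ?_, ?_⟩, ?_⟩
    · simp only
      rw [dif_neg (by omega : ¬ (n - 2 : ℕ) = n - 1), if_pos (by trivial)]
    · simp only
      rw [dif_pos (by trivial)]; ring
    · simpa using hq2
    · refine Prod.ext ?_ ?_ <;> funext i <;> simp only [piR]
      · by_cases h0 : (i : ℕ) = 0
        · rw [if_pos h0]
          rw [dif_neg (by omega : ¬ (0 : ℕ) = n - 1), if_neg (by omega : ¬ (0 : ℕ) = n - 2),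
            dif_neg (by omega : ¬ (n - 2 : ℕ) = n - 1), if_pos (by trivial),
            dif_pos (by trivial)]
          have hi : i = (⟨(0 : ℕ), hlt0⟩ : Fin (n - 1)) := Fin.ext h0
          rw [hi]; ring
        · rw [if_neg h0]
          by_cases h2 : (i : ℕ) = n - 2
          · rw [if_pos h2]
            have hi : i = (⟨n - 2, hlt2⟩ : Fin (n - 1)) := Fin.ext h2
            rw [hi]
          · rw [if_neg h2]
            rw [dif_neg (by have := i.isLt; omega : ¬ (i : ℕ) = n - 1), if_neg h2]
      · by_cases h2 : (i : ℕ) = n - 2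
        · rw [dif_pos h2]
          rw [dif_pos (by trivial), dif_neg (by omega : ¬ (n - 2 : ℕ) = n - 1),
            if_pos (by trivial)]
          have hi : i = (⟨n - 2, hlt2⟩ : Fin (n - 1)) := Fin.ext h2
          have hqi : q.2 i = q.2 ⟨n - 2, hlt2⟩ := congrArg q.2 hi
          rw [hqi, hq1]; ring
        · rw [dif_neg h2]
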